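/- Fix a ∈ (0, 1/2) and define f : 𝕋 → ℂ by f(x+iy) = min(x, 2a−x) + iy. Then f is an injective 1-Lipschitz map (|f(p)−f(q)| ≤ |p−q| for all p, q ∈ 𝕋, with equality attained, so Lip(f) = 1), f(i) = i and f(−i) = −i, and every homeomorphism F from the closed unit disk onto its image in ℂ that extends f satisfies Lip(F) > 1, i.e., there exist p, q in the closed disk with |F(p)−F(q)| > |p−q|. -/

import Mathlib

open Complex Metric Set

/-- The crescent map `f(x+iy) = min(x, 2a−x) + iy`, which reflects the part of the
unit circle with `x ≥ a` across the vertical line `x = a`. -/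
noncomputable def crescentMap (a : ℝ) (z : ℂ) : ℂ :=
  Complex.ofReal (min z.re (2 * a - z.re)) + z.im * Complex.I

/-!
A `1`-Lipschitz extension `F` of the crescent map is forced on the real diameter: a real point
`c` of the disk lies at distance `y = √(1 - c²)` from the two circle points `c ± yi`, whose
images are `m ± yi` with `m = min(c, 2a - c)`, so `F c` lies in two closed balls of radius `y`
that touch only at `m`. Hence `F c = f c`, and `F` identifies the points `1` and `2a - 1`
of the diameter just as `f` does, so it is not injective.
-/

theorem eq_of_dist_add_le_of_dist_sub_le {E : Type*} [NormedAddCommGroup E]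
    [InnerProductSpace ℝ E] {w c v : E} (h₁ : dist w (c + v) ≤ ‖v‖)
    (h₂ : dist w (c - v) ≤ ‖v‖) : w = c := by
  rw [dist_eq_norm, sub_add_eq_sub_sub] at h₁
  rw [dist_eq_norm, sub_sub_eq_add_sub, add_sub_right_comm] at h₂
  have hpar := parallelogram_law_with_norm ℝ (w - c) v
  have h₁' : ‖w - c - v‖ ^ 2 ≤ ‖v‖ ^ 2 := pow_le_pow_left₀ (norm_nonneg _) h₁ 2
  have h₂' : ‖w - c + v‖ ^ 2 ≤ ‖v‖ ^ 2 := pow_le_pow_left₀ (norm_nonneg _) h₂ 2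
  have : ‖w - c‖ ^ 2 = 0 := le_antisymm (by linarith) (sq_nonneg _)
  simpa [sub_eq_zero] using this

namespace crescentMap

variable {a : ℝ}

@[simp]
theorem re (z : ℂ) : (crescentMap a z).re = min z.re (2 * a - z.re) := by
  simp [crescentMap]

@[simp]
theorem im (z : ℂ) : (crescentMap a z).im = z.im := by
  simp [crescentMap]

theorem ofReal_eq (x : ℝ) : crescentMap a x = ↑(min x (2 * a - x)) := by
  apply Complex.ext <;> simp

theorem ofReal_reflect (x : ℝ) : crescentMap a ↑(2 * a - x) = crescentMap a x := by
  rw [ofReal_eq, ofReal_eq, sub_sub_cancel, min_comm]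

theorem add_ofReal_mul_I (z : ℂ) (t : ℝ) :
    crescentMap a (z + t * I) = crescentMap a z + t * I := by
  apply Complex.ext <;> simp

theorem apply_I (ha : 0 ≤ a) : crescentMap a I = I := by
  apply Complex.ext <;> simp [ha]

theorem apply_neg_I (ha : 0 ≤ a) : crescentMap a (-I) = -I := by
  apply Complex.ext <;> simp [ha]

theorem lipschitzWith_one : LipschitzWith 1 (crescentMap a) := by
  refine LipschitzWith.mk_one fun p q => ?_
  have hfold : |min p.re (2 * a - p.re) - min q.re (2 * a - q.re)| ≤ |p.re - q.re| := by
    refine (abs_min_sub_min_le_max _ _ _ _).trans_eq ?_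
    rw [show 2 * a - p.re - (2 * a - q.re) = -(p.re - q.re) by ring, abs_neg, max_self]
  rw [dist_eq_re_im, dist_eq_re_im, re, re, im, im]
  exact Real.sqrt_le_sqrt (by linarith [sq_le_sq.2 hfold])

theorem injOn_sphere (ha : 0 < a) : InjOn (crescentMap a) (sphere 0 1) := by
  intro p hp q hq hpq
  have him : p.im = q.im := by simpa using congrArg Complex.im hpq
  have hmin : min p.re (2 * a - p.re) = min q.re (2 * a - q.re) := by
    simpa using congrArg Complex.re hpq
  have hsq : p.re ^ 2 = q.re ^ 2 := by
    have hp' := sq_norm_sub_sq_re p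
    have hq' := sq_norm_sub_sq_re q
    rw [mem_sphere_zero_iff_norm.1 hp] at hp'
    rw [mem_sphere_zero_iff_norm.1 hq] at hq'
    rw [him] at hp'
    linarith
  refine Complex.ext ?_ him
  rcases sq_eq_sq_iff_eq_or_eq_neg.1 hsq with h | h
  · exact h
  · rw [h] at hmin
    rcases min_cases (-q.re) (2 * a - -q.re) with ⟨e₁, -⟩ | ⟨e₁, -⟩ <;>
      rcases min_cases q.re (2 * a - q.re) with ⟨e₂, -⟩ | ⟨e₂, -⟩ <;> linarith

theorem extension_apply_ofReal {F : ℂ → ℂ} (hF : LipschitzOnWith 1 F (closedBall 0 1))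
    (heq : EqOn F (crescentMap a) (sphere 0 1)) {c : ℝ} (hc : |c| ≤ 1) :
    F c = crescentMap a c := by
  set y := √(1 - c ^ 2)
  have hy : c ^ 2 + y ^ 2 = 1 := by
    rw [Real.sq_sqrt (by nlinarith [sq_abs c, abs_nonneg c])]; ring
  have hsphere : ∀ t : ℝ, t ^ 2 = y ^ 2 → (c + t * I : ℂ) ∈ sphere 0 1 := fun t ht => by
    rw [mem_sphere_zero_iff_norm, norm_add_mul_I, ht, hy, Real.sqrt_one]
  have hcball : (c : ℂ) ∈ closedBall 0 1 := by simpa using hc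
  have hdist : ∀ t : ℝ, t ^ 2 = y ^ 2 →
      dist (F c) (crescentMap a c + t * I) ≤ ‖(y : ℂ) * I‖ := fun t ht => by
    rw [← add_ofReal_mul_I, ← heq (hsphere t ht)]
    refine (hF.dist_le_mul _ hcball _ (sphere_subset_closedBall (hsphere t ht))).trans_eq ?_
    simp [dist_eq_norm, (sq_eq_sq_iff_abs_eq_abs _ _).1 ht]
  refine eq_of_dist_add_le_of_dist_sub_le (v := (y : ℂ) * I) (hdist y rfl) ?_
  simpa [sub_eq_add_neg] using hdist (-y) (neg_sq y)

theorem not_lipschitzOnWith_one_of_injOn (ha₀ : 0 ≤ a) (ha₁ : a < 1) {F : ℂ → ℂ}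
    (hinj : InjOn F (closedBall 0 1)) (heq : EqOn F (crescentMap a) (sphere 0 1)) :
    ¬LipschitzOnWith 1 F (closedBall 0 1) := by
  intro hF
  have hc : |2 * a - 1| ≤ 1 := abs_le.2 ⟨by linarith, by linarith⟩
  have hcball : ((2 * a - 1 : ℝ) : ℂ) ∈ closedBall 0 1 := by
    rwa [mem_closedBall_zero_iff, norm_real, Real.norm_eq_abs]
  have hF_eq : F 1 = F ↑(2 * a - 1) := by
    rw [← ofReal_one, extension_apply_ofReal hF heq (by simp),
      extension_apply_ofReal hF heq hc, ofReal_reflect]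
  have := hinj (by simp) hcball hF_eq
  norm_cast at this
  linarith

end crescentMap

/-- **Example 5.2 (crescent).** Fix `a ∈ (0, 1/2)` and let
`f(x+iy) = min(x, 2a−x) + iy`.  Then `f` is injective and 1-Lipschitz on the unit
circle (with the Lipschitz constant attained, so `Lip(f) = 1`), `f(±i) = ±i`, and every
homeomorphism `F` of the closed unit disk onto its image extending `f` satisfies
`Lip(F) > 1`: some pair of points has `|F p − F q| > |p − q|`. -/
theorem crescent_no_isometric_extension (a : ℝ) (ha0 : 0 < a) (ha1 : a < 1 / 2) :
    InjOn (crescentMap a) (sphere (0:ℂ) 1) ∧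
    (∀ p ∈ sphere (0:ℂ) 1, ∀ q ∈ sphere (0:ℂ) 1,
      dist (crescentMap a p) (crescentMap a q) ≤ dist p q) ∧
    (∃ p ∈ sphere (0:ℂ) 1, ∃ q ∈ sphere (0:ℂ) 1, p ≠ q ∧
      dist (crescentMap a p) (crescentMap a q) = dist p q) ∧
    crescentMap a Complex.I = Complex.I ∧
    crescentMap a (-Complex.I) = -Complex.I ∧
    ∀ F : ℂ → ℂ, ContinuousOn F (closedBall (0:ℂ) 1) →
      InjOn F (closedBall (0:ℂ) 1) →
      EqOn F (crescentMap a) (sphere (0:ℂ) 1) →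
      ∃ p ∈ closedBall (0:ℂ) 1, ∃ q ∈ closedBall (0:ℂ) 1,
        dist p q < dist (F p) (F q) := by
  have hI := crescentMap.apply_I ha0.le
  have hnegI := crescentMap.apply_neg_I ha0.le
  refine ⟨crescentMap.injOn_sphere ha0, fun p _ q _ => ?_,
    ⟨I, by simp, -I, by simp, by norm_num [Complex.ext_iff], by rw [hI, hnegI]⟩, hI, hnegI,
    fun F _ hinj heq => ?_⟩
  · simpa using crescentMap.lipschitzWith_one.dist_le_mul p q
  · by_contra! hF
    exact crescentMap.not_lipschitzOnWith_one_of_injOn ha0.le (by linarith) hinj heq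
      (LipschitzOnWith.mk_one hF)
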